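/- arXiv:1412.7088 — 5 statements merged into one kernel-verified Lean document; each statement's English description precedes it below -/
import Mathlib

section
/- Let n ≥ 1, ω ∈ ℝⁿ, and define the linear form L(x) = ω·x. For a real number y write ‖y‖ for its distance to the nearest integer. Let A, X > 0 and suppose there is no x ∈ ℤⁿ∖{0} with ‖L(x)‖ ≤ A and |x_i| ≤ X for all i = 1,…,n. Then for every α ∈ ℝ there exists x ∈ ℤⁿ with ‖L(x) − α‖ ≤ A₁ and |x_i| ≤ X₁ for all i, where h = X^{-n}A^{-1}, A₁ = (1/2)(h+1)A and X₁ = (1/2)(h+1)X. -/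
/-- `distToInt y` is the distance from the real number `y` to the nearest integer. -/
noncomputable def distToInt (y : ℝ) : ℝ := |y - (round y : ℝ)|

/-!
Write `L(y) = ω · y` and `M = ⌊X⌋`. By hypothesis the values `L(g)`, `g ∈ {0, …, M}ⁿ`, are pairwise
more than `A` apart modulo `1`. Discretising the circle at a large prime scale `Q`, the arcs
`[Q L(g), Q L(g) + A Q]` become `(M + 1)ⁿ` disjoint blocks of about `A Q` residues in `ℤ/Qℤ`; in
particular `(M + 1)ⁿ A < 1`. If `m` is the least integer with `m (M + 1)ⁿ A > 1`, the
Cauchy–Davenport theorem makes the `m`-fold sumset of these blocks all of `ℤ/Qℤ`, so every target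
is within about `m A / 2` of some `L(x)` with `x ∈ {0, …, m M}ⁿ`. Centring `x` at `m M / 2` and
letting `Q → ∞` gives the bounds, because `m < h + 1`.
-/

open Finset Pointwise Filter Topology

theorem distToInt_le_abs_sub_intCast (y : ℝ) (k : ℤ) : distToInt y ≤ |y - k| := round_le y k

theorem distToInt_le_half (y : ℝ) : distToInt y ≤ 1 / 2 := abs_sub_round y

theorem distToInt_add_le (y z : ℝ) : distToInt (y + z) ≤ distToInt y + |z| :=
  (distToInt_le_abs_sub_intCast _ (round y)).trans <| by
    rw [add_sub_right_comm]; exact abs_add_le _ _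

theorem Set.Finite.exists_gt_forall_lt {α : Type*} {s : Set α} (hs : s.Finite) {f : α → ℝ}
    {A : ℝ} (h : ∀ y ∈ s, A < f y) : ∃ A' > A, ∀ y ∈ s, A' < f y := by
  have : ∀ᶠ A' in 𝓝[>] A, ∀ y ∈ s, A' < f y := hs.eventually_all.2 fun y hy =>
    eventually_nhdsWithin_of_eventually_nhds (eventually_lt_nhds (h y hy))
  obtain ⟨A', h1, h2⟩ := (this.and self_mem_nhdsWithin).exists
  exact ⟨A', h2, h1⟩

theorem Finset.nsmul_Icc_subset {α : Type*} [AddMonoid α] [Preorder α] [DecidableEq α]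
    [AddLeftMono α] [AddRightMono α] [LocallyFiniteOrder α] (a b : α) :
    ∀ m : ℕ, m • Icc a b ⊆ Icc (m • a) (m • b)
  | 0 => by simp
  | m + 1 => by
    simp only [succ_nsmul]
    exact (add_subset_add_right (nsmul_Icc_subset a b m)).trans (Icc_add_Icc_subset _ _ _ _)

theorem ZMod.min_le_card_nsmul {p : ℕ} (hp : p.Prime) {s : Finset (ZMod p)} (hs : s.Nonempty) :
    ∀ m : ℕ, min p (m * (#s - 1) + 1) ≤ #(m • s)
  | 0 => by simp
  | m + 1 => by
    have := ZMod.cauchy_davenport hp (hs.nsmul (n := m)) hs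
    have ih := ZMod.min_le_card_nsmul hp hs m
    rw [succ_nsmul, add_mul, one_mul]
    have : 1 ≤ #s := hs.card_pos
    omega

theorem ZMod.exists_mem_nsmul_map_eq {p : ℕ} [Fact p.Prime] {G : Type*} [AddCommMonoid G]
    [DecidableEq G] (f : G →+ ZMod p) {s : Finset G} (hs : s.Nonempty) (hf : Set.InjOn f s)
    {m : ℕ} (hm : p ≤ m * (#s - 1) + 1) (z : ZMod p) : ∃ g ∈ m • s, f g = z := by
  have hcard := ZMod.min_le_card_nsmul Fact.out (hs.image f) m
  rw [card_image_of_injOn hf, min_eq_left hm, ← image_nsmul] at hcard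
  have huniv : (m • s).image f = univ :=
    eq_univ_of_card _ (le_antisymm (card_le_univ _) (by simpa using hcard))
  rw [← mem_image, huniv]
  exact mem_univ z

theorem eventually_div_lt (c : ℝ) {d : ℝ} (hd : 0 < d) : ∀ᶠ Q : ℕ in atTop, c / Q < d :=
  (tendsto_const_div_atTop_nhds_zero_nat c).eventually (gt_mem_nhds hd)

theorem abs_sub_ediv_two_le {x K : ℤ} (h0 : 0 ≤ x) (hK : x ≤ K) :
    |((x - K / 2 : ℤ) : ℝ)| ≤ (K + 1) / 2 := by
  have h1 : 2 * (x - K / 2) ≤ K + 1 := by omega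
  have h2 : -(K + 1) ≤ 2 * (x - K / 2) := by omega
  rw [abs_le]
  constructor
  · have := (Int.cast_le (R := ℝ)).2 h2; push_cast at this ⊢; linarith
  · have := (Int.cast_le (R := ℝ)).2 h1; push_cast at this ⊢; linarith

theorem exists_nat_one_lt_mul_le_inv_add_one {c : ℝ} (hc : 0 < c) :
    ∃ m : ℕ, 1 < m * c ∧ (m : ℝ) ≤ c⁻¹ + 1 := by
  refine ⟨⌊c⁻¹⌋₊ + 1, ?_, ?_⟩
  · have := Nat.lt_floor_add_one c⁻¹
    push_cast
    rwa [inv_lt_iff_one_lt_mul₀ hc] at this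
  · push_cast
    linarith [Nat.floor_le (inv_pos.2 hc).le]

/-- The form `(y, u) ↦ ∑ round (Q ω_i) y_i + u` reduced mod `Q`, an additive discretisation of
`(y, u) ↦ Q (ω · y) + u`. -/
noncomputable def roundedForm {n : ℕ} (Q : ℕ) (ω : Fin n → ℝ) : (Fin n → ℤ) × ℤ →+ ZMod Q :=
  (Int.castAddHom (ZMod Q)).comp
    { toFun := fun p => ∑ i, round (Q * ω i) * p.1 i + p.2
      map_zero' := by simp
      map_add' := fun p q => by
        simp only [Prod.fst_add, Prod.snd_add, Pi.add_apply, mul_add, sum_add_distrib]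
        ring }

theorem roundedForm_apply {n : ℕ} (Q : ℕ) (ω : Fin n → ℝ) (p : (Fin n → ℤ) × ℤ) :
    roundedForm Q ω p = ((∑ i, round (Q * ω i) * p.1 i + p.2 : ℤ) : ZMod Q) := rfl

theorem distToInt_add_div_le_of_roundedForm_eq_zero {n Q : ℕ} (hQ : 0 < Q) (ω : Fin n → ℝ)
    {y : Fin n → ℤ} {u : ℤ} {K : ℝ} (hy : ∀ i, |(y i : ℝ)| ≤ K)
    (h : roundedForm Q ω (y, u) = 0) :
    distToInt (∑ i, ω i * y i + u / Q) ≤ n * K / (2 * Q) := by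
  obtain ⟨k, hk⟩ := (ZMod.intCast_zmod_eq_zero_iff_dvd _ Q).1 h
  have hk' : ∑ i, (round (Q * ω i) : ℝ) * y i + u = Q * k := by exact_mod_cast hk
  have hQ' : (0 : ℝ) < Q := by exact_mod_cast hQ
  have herr : ∑ i, ω i * y i + u / Q - k = (∑ i, (Q * ω i - round (Q * ω i)) * y i) / Q := by
    simp only [sub_mul, sum_sub_distrib, mul_assoc, ← mul_sum]
    field_simp
    linear_combination hk'
  calc distToInt (∑ i, ω i * y i + u / Q)
      ≤ |∑ i, ω i * y i + u / Q - k| := distToInt_le_abs_sub_intCast _ k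
    _ ≤ (∑ _i : Fin n, 1 / 2 * K) / Q := by
        rw [herr, abs_div, abs_of_pos hQ']
        gcongr
        refine (abs_sum_le_sum_abs _ _).trans (sum_le_sum fun i _ => ?_)
        rw [abs_mul]
        exact mul_le_mul (abs_sub_round _) (hy i) (abs_nonneg _) (by norm_num)
    _ = n * K / (2 * Q) := by
        rw [sum_const, card_univ, Fintype.card_fin, nsmul_eq_mul]
        ring

section Box

-- `Finset.Icc` on `(Fin n → ℤ) × ℤ` needs decidability of `≤`.
open scoped Classical

theorem card_Icc_zero_const_prod (n M W : ℕ) :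
    #(Icc (0 : (Fin n → ℤ) × ℤ) (fun _ => (M : ℤ), (W : ℤ))) = (M + 1) ^ n * (W + 1) := by
  simp [card_Icc_prod, Pi.card_Icc]

section Separated

variable {n M : ℕ} {ω : Fin n → ℝ} {A A' : ℝ}
  (hsep : ∀ y : Fin n → ℤ, y ≠ 0 → (∀ i, |y i| ≤ M) → A' < distToInt (∑ i, ω i * y i))
include hsep

theorem injOn_roundedForm {Q W : ℕ} (hQ : 0 < Q) (hWQ : W < Q) (hQA : (n * M / 2 + W) / Q ≤ A') :
    Set.InjOn (roundedForm Q ω) ↑(Icc (0 : (Fin n → ℤ) × ℤ) (fun _ => (M : ℤ), (W : ℤ))) := by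
  intro p hp p' hp' hpp'
  simp only [coe_Icc, Set.mem_Icc, Prod.le_def, Pi.le_def, Prod.fst_zero, Prod.snd_zero,
    Pi.zero_apply] at hp hp'
  have hker : roundedForm Q ω (p.1 - p'.1, p.2 - p'.2) = 0 := by
    rw [← Prod.mk_sub_mk, map_sub, hpp', sub_self]
  have hy : ∀ i, |p.1 i - p'.1 i| ≤ M := fun i =>
    abs_sub_le_iff.2 ⟨by linarith [hp.2.1 i, hp'.1.1 i], by linarith [hp.1.1 i, hp'.2.1 i]⟩
  have hv : |p.2 - p'.2| ≤ W := abs_sub_le_iff.2 ⟨by linarith, by linarith⟩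
  have hQ' : (0 : ℝ) < Q := by exact_mod_cast hQ
  have h1 : p.1 - p'.1 = 0 := by
    by_contra hne
    have hclose := distToInt_add_div_le_of_roundedForm_eq_zero hQ ω (K := M)
      (fun i => by exact_mod_cast hy i) hker
    have hshift := distToInt_add_le (∑ i, ω i * ((p.1 - p'.1) i : ℝ) + (p.2 - p'.2 : ℤ) / Q)
      (-((p.2 - p'.2 : ℤ) / Q))
    have hvQ : |-(((p.2 - p'.2 : ℤ) : ℝ) / Q)| ≤ W / Q := by
      rw [abs_neg, abs_div, abs_of_pos hQ']
      gcongr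
      exact_mod_cast hv
    have : (n * M / 2 + W : ℝ) / Q = n * M / (2 * Q) + W / Q := by field_simp
    simp only [add_neg_cancel_right] at hshift
    linarith [hsep _ hne hy]
  rw [h1, roundedForm_apply] at hker
  simp only [Pi.zero_apply, mul_zero, sum_const_zero, zero_add] at hker
  obtain ⟨k, hk⟩ := (ZMod.intCast_zmod_eq_zero_iff_dvd _ Q).1 hker
  have h2 : p.2 - p'.2 = 0 :=
    Int.eq_zero_of_abs_lt_dvd ⟨k, hk⟩ (hv.trans_lt (by exact_mod_cast hWQ))
  exact Prod.ext (sub_eq_zero.1 h1) (sub_eq_zero.1 h2)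

theorem pow_mul_lt_one_of_separated (hA : 0 ≤ A) (hAA' : A < A') (hA1 : A < 1) :
    ((M + 1) ^ n : ℝ) * A < 1 := by
  obtain ⟨Q, hQA, hQ⟩ :=
    ((eventually_div_lt (n * M / 2) (sub_pos.2 hAA')).and (eventually_gt_atTop 0)).exists
  have : NeZero Q := ⟨hQ.ne'⟩
  have hQ' : (0 : ℝ) < Q := by exact_mod_cast hQ
  set W := ⌊A * Q⌋₊
  have hW : (W : ℝ) ≤ A * Q := Nat.floor_le (by positivity)
  have hWQ : W < Q := by
    have : (W : ℝ) < Q := hW.trans_lt (by nlinarith)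
    exact_mod_cast this
  have hinj := injOn_roundedForm hsep hQ hWQ ?_
  · have hcard := (card_image_of_injOn hinj).symm.trans_le (card_le_univ _)
    rw [card_Icc_zero_const_prod, ZMod.card] at hcard
    have hcard' : ((M + 1) ^ n * (W + 1) : ℝ) ≤ Q := by exact_mod_cast hcard
    have hN : (0 : ℝ) < (M + 1) ^ n := by positivity
    nlinarith [Nat.lt_floor_add_one (A * Q)]
  · rw [add_div]
    linarith [div_le_div_of_nonneg_right hW hQ'.le, mul_div_cancel_right₀ A hQ'.ne']

theorem exists_distToInt_sub_le_of_prime {Q W m : ℕ} [Fact Q.Prime] (hWQ : W < Q)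
    (hQA : (n * M / 2 + W) / Q ≤ A')
    (hcover : Q ≤ m * ((M + 1) ^ n * (W + 1) - 1) + 1) (β : ℝ) :
    ∃ x : Fin n → ℤ, (∀ i, 0 ≤ x i ∧ x i ≤ m * M) ∧
      distToInt (∑ i, ω i * x i - β) ≤ (m * W + n * m * M + 1) / (2 * Q) := by
  have hQ : 0 < Q := (Fact.out : Q.Prime).pos
  have hQ' : (0 : ℝ) < Q := by exact_mod_cast hQ
  -- the residual `u ∈ [0, m W]` left over below is centred by aiming at `Q β + m W / 2`
  set k := round (Q * β + m * W / 2)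
  have hne : (Icc (0 : (Fin n → ℤ) × ℤ) (fun _ => (M : ℤ), (W : ℤ))).Nonempty :=
    nonempty_Icc.2 (Prod.le_def.2 ⟨fun _ => by simp, by simp⟩)
  obtain ⟨p, hp, hpk⟩ := ZMod.exists_mem_nsmul_map_eq (roundedForm Q ω) hne
    (injOn_roundedForm hsep hQ hWQ hQA) (by rwa [card_Icc_zero_const_prod]) (k : ZMod Q)
  replace hp := nsmul_Icc_subset _ _ m hp
  simp only [mem_Icc, Prod.le_def, Pi.le_def, Prod.smul_mk, smul_zero, Prod.fst_zero,
    Prod.snd_zero, Pi.zero_apply, nsmul_eq_mul, Pi.mul_apply, Pi.natCast_apply] at hp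
  have hker : roundedForm Q ω (p.1, p.2 - k) = 0 := by
    rw [← sub_zero p.1, ← Prod.mk_sub_mk, map_sub, hpk, roundedForm_apply]
    simp
  have hclose := distToInt_add_div_le_of_roundedForm_eq_zero hQ ω (K := m * M)
    (fun i => by rw [abs_of_nonneg (by exact_mod_cast hp.1.1 i)]; exact_mod_cast hp.2.1 i) hker
  refine ⟨p.1, fun i => ⟨hp.1.1 i, hp.2.1 i⟩, ?_⟩
  have hround : |(k : ℝ) - (Q * β + m * W / 2)| ≤ 1 / 2 := by
    rw [abs_sub_comm]; exact abs_sub_round _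
  have hu : |(p.2 : ℝ) - m * W / 2| ≤ m * W / 2 := by
    have h0 : (0 : ℝ) ≤ p.2 := by exact_mod_cast hp.1.2
    have h1 : (p.2 : ℝ) ≤ m * W := by exact_mod_cast hp.2.2
    exact abs_sub_le_iff.2 ⟨by linarith, by linarith⟩
  have hsplit : ∑ i, ω i * p.1 i - β = (∑ i, ω i * p.1 i + ((p.2 - k : ℤ) : ℝ) / Q)
      + (((k : ℝ) - (Q * β + m * W / 2)) - ((p.2 : ℝ) - m * W / 2)) / Q := by
    field_simp
    push_cast
    ring
  rw [hsplit]
  refine (distToInt_add_le _ _).trans ?_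
  rw [abs_div, abs_of_pos hQ']
  refine (add_le_add hclose (div_le_div_of_nonneg_right
    ((abs_sub _ _).trans (add_le_add hround hu)) hQ'.le)).trans_eq ?_
  field_simp
  ring

theorem exists_distToInt_sub_le (hA : 0 ≤ A) (hAA' : A < A') (hA1 : A < 1) {m : ℕ}
    (hm : 1 < m * (M + 1) ^ n * A) {ε : ℝ} (hε : 0 < ε) (β : ℝ) :
    ∃ x : Fin n → ℤ, (∀ i, 0 ≤ x i ∧ x i ≤ m * M) ∧
      distToInt (∑ i, ω i * x i - β) ≤ m * A / 2 + ε := by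
  obtain ⟨Q₀, hQ₀⟩ := eventually_atTop.1 <|
    (eventually_div_lt (n * M / 2) (sub_pos.2 hAA')).and <|
    (eventually_div_lt (m - 1) (sub_pos.2 hm)).and (eventually_div_lt ((n * m * M + 1) / 2) hε)
  obtain ⟨Q, hQQ₀, hQ⟩ := Nat.exists_infinite_primes (Q₀ + 1)
  have : Fact Q.Prime := ⟨hQ⟩
  obtain ⟨hsepQ, hcoverQ, herrQ⟩ := hQ₀ Q (by omega)
  have hQ' : (0 : ℝ) < Q := by exact_mod_cast hQ.pos
  rw [div_lt_iff₀ hQ'] at hsepQ hcoverQ herrQ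
  set W := ⌊A * Q⌋₊
  have hW : (W : ℝ) ≤ A * Q := Nat.floor_le (by positivity)
  have hW' : A * Q < W + 1 := Nat.lt_floor_add_one _
  have hWQ : W < Q := by
    have : (W : ℝ) < Q := hW.trans_lt (by nlinarith)
    exact_mod_cast this
  have hcover : Q ≤ m * ((M + 1) ^ n * (W + 1) - 1) + 1 := by
    have hN : (1 : ℝ) ≤ (M + 1) ^ n := one_le_pow₀ (by linarith [M.cast_nonneg (α := ℝ)])
    have : (Q : ℝ) ≤ m * ((M + 1) ^ n * (W + 1) - 1) + 1 := by
      nlinarith [mul_le_mul_of_nonneg_left hW'.le (by positivity : (0 : ℝ) ≤ m * (M + 1) ^ n)]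
    have hpos : 1 ≤ (M + 1) ^ n * (W + 1) := Nat.one_le_iff_ne_zero.2 (by positivity)
    rw [← Nat.cast_le (α := ℝ)]
    push_cast [Nat.cast_sub hpos]
    exact this
  obtain ⟨x, hx, hdist⟩ := exists_distToInt_sub_le_of_prime hsep hWQ
    (by rw [add_div]; linarith [div_le_div_of_nonneg_right hW hQ'.le,
      mul_div_cancel_right₀ A hQ'.ne', (div_lt_iff₀ hQ').2 hsepQ]) hcover β
  refine ⟨x, hx, hdist.trans ?_⟩
  rw [div_le_iff₀ (by positivity)]
  nlinarith [mul_le_mul_of_nonneg_left hW (Nat.cast_nonneg (α := ℝ) m)]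

theorem exists_abs_le_distToInt_sub_le (hA : 0 ≤ A) (hAA' : A < A') (hA1 : A < 1) {m : ℕ}
    (hm : 1 < m * (M + 1) ^ n * A) {ε : ℝ} (hε : 0 < ε) (α : ℝ) :
    ∃ x : Fin n → ℤ, (∀ i, |(x i : ℝ)| ≤ (m * M + 1) / 2) ∧
      distToInt (∑ i, ω i * x i - α) ≤ m * A / 2 + ε := by
  set s : ℤ := m * M / 2
  obtain ⟨x, hx, hdist⟩ := exists_distToInt_sub_le hsep hA hAA' hA1 hm hε (α + s * ∑ i, ω i)
  refine ⟨fun i => x i - s, fun i => ?_, ?_⟩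
  · simpa using abs_sub_ediv_two_le (hx i).1 (hx i).2
  · have hshift : ∑ i, ω i * ((x i - s : ℤ) : ℝ) - α = ∑ i, ω i * x i - (α + s * ∑ i, ω i) := by
      push_cast
      simp only [mul_sub, sum_sub_distrib, ← sum_mul]
      ring
    rwa [hshift]

end Separated

end Box

theorem exists_gt_separation {n : ℕ} {ω : Fin n → ℝ} {A X : ℝ} (hX : 0 ≤ X)
    (hno : ¬ ∃ x : Fin n → ℤ, x ≠ 0 ∧
      distToInt (∑ i, ω i * (x i : ℝ)) ≤ A ∧ ∀ i, |(x i : ℝ)| ≤ X) :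
    ∃ A' > A, ∀ y : Fin n → ℤ, y ≠ 0 → (∀ i, |y i| ≤ ⌊X⌋₊) →
      A' < distToInt (∑ i, ω i * y i) := by
  have hfin : {y : Fin n → ℤ | y ≠ 0 ∧ ∀ i, |y i| ≤ ⌊X⌋₊}.Finite :=
    (Set.finite_Icc (-fun _ => (⌊X⌋₊ : ℤ)) fun _ => (⌊X⌋₊ : ℤ)).subset fun y hy =>
      ⟨fun i => neg_le_of_abs_le (hy.2 i), fun i => le_of_abs_le (hy.2 i)⟩
  obtain ⟨A', hAA', hA'⟩ := hfin.exists_gt_forall_lt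
    (f := fun y => distToInt (∑ i, ω i * y i)) fun y ⟨hy0, hyX⟩ => by
      by_contra! hle
      refine hno ⟨y, hy0, hle, fun i => ?_⟩
      exact (by exact_mod_cast hyX i : |(y i : ℝ)| ≤ ⌊X⌋₊).trans (Nat.floor_le hX)
  exact ⟨A', hAA', fun y hy0 hyX => hA' y ⟨hy0, hyX⟩⟩

theorem natCast_mul_add_one_le {n M m : ℕ} (hn : n ≠ 0) {A X : ℝ} (hA : 0 < A) (hX : 0 < X)
    (hMX : M ≤ X) (hXM : X < M + 1) (hNA : ((M + 1) ^ n : ℝ) * A < 1)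
    (hm : m ≤ (((M + 1) ^ n : ℝ) * A)⁻¹ + 1) :
    m * M + 1 ≤ ((X ^ n)⁻¹ * A⁻¹ + 1) * X := by
  have hpow : (M + 1) * X ^ n ≤ X * (M + 1) ^ n := by
    obtain ⟨k, rfl⟩ := Nat.exists_eq_succ_of_ne_zero hn
    have := mul_le_mul_of_nonneg_left (pow_le_pow_left₀ hX.le hXM.le k)
      (by positivity : (0 : ℝ) ≤ X * (M + 1))
    rw [pow_succ, pow_succ]
    linarith
  have ht : (M + 1) * (((M + 1) ^ n : ℝ) * A)⁻¹ ≤ X * (X ^ n * A)⁻¹ := by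
    rw [← div_eq_mul_inv, ← div_eq_mul_inv, div_le_div_iff₀ (by positivity) (by positivity)]
    nlinarith
  have h1 : 1 ≤ (((M + 1) ^ n : ℝ) * A)⁻¹ := one_le_inv_iff₀.2 ⟨by positivity, hNA.le⟩
  calc (m * M + 1 : ℝ) ≤ ((((M + 1) ^ n : ℝ) * A)⁻¹ + 1) * M + 1 := by gcongr
    _ ≤ (M + 1) * (((M + 1) ^ n : ℝ) * A)⁻¹ + X := by nlinarith
    _ ≤ X * (X ^ n * A)⁻¹ + X := by linarith
    _ = ((X ^ n)⁻¹ * A⁻¹ + 1) * X := by rw [mul_inv]; ring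

theorem nonhomogeneous_dirichlet_general
    (n : ℕ) (ω : Fin n → ℝ) (A X : ℝ) (hA : 0 < A) (hX : 0 < X)
    (hno : ¬ ∃ x : Fin n → ℤ, x ≠ 0 ∧
      distToInt (∑ i, ω i * (x i : ℝ)) ≤ A ∧ ∀ i, |(x i : ℝ)| ≤ X) :
    ∀ α : ℝ, ∃ x : Fin n → ℤ,
      distToInt ((∑ i, ω i * (x i : ℝ)) - α) ≤ (1 / 2) * ((X ^ n)⁻¹ * A⁻¹ + 1) * A ∧
      ∀ i, |(x i : ℝ)| ≤ (1 / 2) * ((X ^ n)⁻¹ * A⁻¹ + 1) * X := by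
  intro α
  rcases le_or_gt 1 ((X ^ n)⁻¹ + A) with htriv | htriv
  · refine ⟨0, ?_, fun i => by simp; positivity⟩
    have : (1 / 2) * ((X ^ n)⁻¹ * A⁻¹ + 1) * A = ((X ^ n)⁻¹ + A) / 2 := by field_simp
    linarith [distToInt_le_half ((∑ i, ω i * ((0 : Fin n → ℤ) i : ℝ)) - α)]
  have hn : n ≠ 0 := by rintro rfl; simp at htriv; linarith
  have hA1 : A < 1 := by linarith [inv_pos.2 (pow_pos hX n)]
  set M := ⌊X⌋₊
  have hXM : X < M + 1 := Nat.lt_floor_add_one X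
  obtain ⟨A', hAA', hsep⟩ := exists_gt_separation hX.le hno
  have hNA := pow_mul_lt_one_of_separated hsep hA.le hAA' hA1
  obtain ⟨m, hm1, hm⟩ :=
    exists_nat_one_lt_mul_le_inv_add_one (by positivity : (0 : ℝ) < (M + 1) ^ n * A)
  have hmh : (m : ℝ) < (X ^ n)⁻¹ * A⁻¹ + 1 := by
    have : (((M + 1) ^ n : ℝ) * A)⁻¹ < (X ^ n)⁻¹ * A⁻¹ := by
      rw [← mul_inv]
      exact inv_strictAnti₀ (by positivity) (by gcongr)
    linarith
  obtain ⟨x, hx, hdist⟩ := exists_abs_le_distToInt_sub_le hsep hA.le hAA' hA1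
    (by rwa [mul_assoc]) (ε := ((X ^ n)⁻¹ * A⁻¹ + 1 - m) * A / 2) (by nlinarith) α
  refine ⟨x, by linarith, fun i => (hx i).trans ?_⟩
  linarith [natCast_mul_add_one_le hn hA hX (Nat.floor_le hX.le) hXM hNA hm]

/-- Non-homogeneous Dirichlet theorem (Cassels): if the linear form `L(x) = ω·x` admits no
nonzero integer vector `x` with `‖L(x)‖ ≤ A` and `|x_i| ≤ X`, then for every `α ∈ ℝ` the
inhomogeneous problem `‖L(x) - α‖ ≤ A₁`, `|x_i| ≤ X₁` has an integer solution, where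
`h = X^{-n} A^{-1}`, `A₁ = (1/2)(h+1)A` and `X₁ = (1/2)(h+1)X`. -/
theorem nonhomogeneous_dirichlet
    (n : ℕ) (hn : 1 ≤ n) (ω : Fin n → ℝ) (A X : ℝ) (hA : 0 < A) (hX : 0 < X)
    (hno : ¬ ∃ x : Fin n → ℤ, x ≠ 0 ∧
      distToInt (∑ i, ω i * (x i : ℝ)) ≤ A ∧ ∀ i, |(x i : ℝ)| ≤ X) :
    ∀ α : ℝ, ∃ x : Fin n → ℤ,
      distToInt ((∑ i, ω i * (x i : ℝ)) - α) ≤ (1 / 2) * ((X ^ n)⁻¹ * A⁻¹ + 1) * A ∧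
      ∀ i, |(x i : ℝ)| ≤ (1 / 2) * ((X ^ n)⁻¹ * A⁻¹ + 1) * X :=
  nonhomogeneous_dirichlet_general n ω A X hA hX hno
end

section
/- Let k', k'' ∈ ℤ³ be linearly independent, let ν > 0, and let ω ∈ ℝ³ satisfy ω·k' = ω·k'' = 0 and |ω| ≥ ν. Then every k ∈ ℤ³ not lying in the real span of {k', k''} satisfies |ω·k| ≥ ν/|k'×k''|, where × denotes the cross product in ℝ³. Consequently, if ω = (ω',1) with ω' ∈ ℝ² and k ∈ (ℤ²∖{0})×ℤ is not in the real span of {k', k''}, then every point ω'' on the resonance line Γ_k satisfies |ω'' − ω'| ≥ ν/(|k'×k''| |k|). -/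
open Real Set

/-- Euclidean norm of an integer vector `k ∈ ℤ³`. -/
noncomputable def knorm (k : Fin 3 → ℤ) : ℝ :=
  Real.sqrt ((k 0 : ℝ) ^ 2 + (k 1 : ℝ) ^ 2 + (k 2 : ℝ) ^ 2)

/-- `k·(ω,1)` for `k ∈ ℤ³` and `ω ∈ ℝ²`. -/
noncomputable def kdot (k : Fin 3 → ℤ) (ω : ℝ × ℝ) : ℝ :=
  (k 0 : ℝ) * ω.1 + (k 1 : ℝ) * ω.2 + (k 2 : ℝ)

/-- Membership in `(ℤ²∖{0})×ℤ`: the first two components do not both vanish. -/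
def isRes (k : Fin 3 → ℤ) : Prop := ¬ (k 0 = 0 ∧ k 1 = 0)

/-- The resonance line `Γ_k = {ω ∈ ℝ² : k·(ω,1) = 0}`. -/
def resLine (k : Fin 3 → ℤ) : Set (ℝ × ℝ) := {ω | kdot k ω = 0}

/-- Euclidean distance in `ℝ²`. -/
noncomputable def dist2 (a b : ℝ × ℝ) : ℝ :=
  Real.sqrt ((a.1 - b.1) ^ 2 + (a.2 - b.2) ^ 2)

/-- Dot product in `ℝ³`. -/
noncomputable def dot3 (v w : Fin 3 → ℝ) : ℝ := v 0 * w 0 + v 1 * w 1 + v 2 * w 2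

/-- Euclidean norm in `ℝ³`. -/
noncomputable def norm3 (v : Fin 3 → ℝ) : ℝ := Real.sqrt (v 0 ^ 2 + v 1 ^ 2 + v 2 ^ 2)

/-- Cross product in `ℝ³`. -/
noncomputable def cross3 (a b : Fin 3 → ℝ) : Fin 3 → ℝ :=
  ![a 1 * b 2 - a 2 * b 1, a 2 * b 0 - a 0 * b 2, a 0 * b 1 - a 1 * b 0]

/-- Cast of an integer vector to `ℝ³`. -/
noncomputable def castZ (k : Fin 3 → ℤ) : Fin 3 → ℝ := fun i => (k i : ℝ)

/-!
Orthogonality to `k'` and `k''` forces `ω = c • (k' × k'')`, so `ω · k = c · det (k, k', k'')` and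
`|c| = |ω| / |k' × k''|`. For `k ∉ span {k', k''}` the determinant is a nonzero integer, hence
`|ω · k| ≥ |ω| / |k' × k''|`. For `ω = (ω', 1)` and `ω''` on `Γ_k` one has
`k · (ω', 1) = (k₁, k₂) · (ω' - ω'')`, and Cauchy–Schwarz gives the distance bound.
-/

open Matrix

lemma cross3_eq_crossProduct (a b : Fin 3 → ℝ) : cross3 a b = a ⨯₃ b := by
  rw [cross_apply]; rfl

lemma dot3_eq_dotProduct (v w : Fin 3 → ℝ) : dot3 v w = v ⬝ᵥ w := by
  simp [dot3, dotProduct, Fin.sum_univ_three]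

lemma norm3_smul (c : ℝ) (v : Fin 3 → ℝ) : norm3 (c • v) = |c| * norm3 v := by
  rw [norm3, norm3, ← Real.sqrt_sq_eq_abs, ← Real.sqrt_mul (sq_nonneg c)]
  congr 1
  simp only [Pi.smul_apply, smul_eq_mul]
  ring

lemma exists_smul_cross_eq_of_dotProduct_eq_zero {F : Type*} [Field F] {a b ω : Fin 3 → F}
    (hab : LinearIndependent F ![a, b]) (ha : ω ⬝ᵥ a = 0) (hb : ω ⬝ᵥ b = 0) :
    ∃ c : F, c • a ⨯₃ b = ω := by
  have hcross : a ⨯₃ b ⨯₃ ω = 0 := by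
    rw [← cross_anticomm, cross_cross_eq_smul_sub_smul', hb, dotProduct_comm, ha]
    simp
  have hX : a ⨯₃ b ≠ 0 := crossProduct_ne_zero_iff_linearIndependent.mpr hab
  have hdep : ¬ LinearIndependent F ![a ⨯₃ b, ω] :=
    fun h ↦ crossProduct_ne_zero_iff_linearIndependent.mpr h hcross
  simpa [LinearIndependent.pair_iff' hX] using hdep

lemma dotProduct_cross_ne_zero_of_notMem_span {F : Type*} [Field F] {a b v : Fin 3 → F}
    (hab : LinearIndependent F ![a, b]) (hv : v ∉ Submodule.span F {a, b}) :
    v ⬝ᵥ a ⨯₃ b ≠ 0 := by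
  have hrows : LinearIndependent F ![v, a, b] := by
    refine linearIndependent_finCons.mpr ⟨hab, ?_⟩
    rwa [range_cons_cons_empty]
  rw [triple_product_eq_det]
  exact (isUnit_iff_isUnit_det _).mp (linearIndependent_rows_iff_isUnit.mp hrows) |>.ne_zero

lemma div_norm3_cross_le_abs_dotProduct {a b ω v : Fin 3 → ℝ}
    (hab : LinearIndependent ℝ ![a, b]) (ha : ω ⬝ᵥ a = 0) (hb : ω ⬝ᵥ b = 0)
    (hv : 1 ≤ |v ⬝ᵥ a ⨯₃ b|) :
    norm3 ω / norm3 (a ⨯₃ b) ≤ |ω ⬝ᵥ v| := by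
  obtain ⟨c, rfl⟩ := exists_smul_cross_eq_of_dotProduct_eq_zero hab ha hb
  rw [norm3_smul, smul_dotProduct, smul_eq_mul, abs_mul, dotProduct_comm]
  refine div_le_of_le_mul₀ (Real.sqrt_nonneg _) (by positivity) ?_
  rw [mul_right_comm]
  exact le_mul_of_one_le_right (mul_nonneg (abs_nonneg c) (Real.sqrt_nonneg _)) hv

lemma castZ_dotProduct_cross (k k' k'' : Fin 3 → ℤ) :
    castZ k ⬝ᵥ castZ k' ⨯₃ castZ k'' = ((k ⬝ᵥ k' ⨯₃ k'' : ℤ) : ℝ) := by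
  simp [castZ, cross_apply, dotProduct, Fin.sum_univ_three]

lemma one_le_abs_castZ_dotProduct_cross {k k' k'' : Fin 3 → ℤ}
    (hind : LinearIndependent ℝ ![castZ k', castZ k''])
    (hk : castZ k ∉ Submodule.span ℝ {castZ k', castZ k''}) :
    1 ≤ |castZ k ⬝ᵥ castZ k' ⨯₃ castZ k''| := by
  have hne := dotProduct_cross_ne_zero_of_notMem_span hind hk
  rw [castZ_dotProduct_cross, Int.cast_ne_zero] at hne
  rw [castZ_dotProduct_cross, ← Int.cast_abs]
  exact_mod_cast Int.one_le_abs hne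

lemma dot3_vec3_one_castZ (ω' : ℝ × ℝ) (k : Fin 3 → ℤ) :
    dot3 ![ω'.1, ω'.2, 1] (castZ k) = kdot k ω' := by
  simp [dot3, kdot, castZ]
  ring

lemma abs_kdot_le_knorm_mul_dist2 {k : Fin 3 → ℤ} {ω'' : ℝ × ℝ} (hω'' : ω'' ∈ resLine k)
    (ω' : ℝ × ℝ) : |kdot k ω'| ≤ knorm k * dist2 ω'' ω' := by
  have hline : kdot k ω' = (k 0 : ℝ) * (ω'.1 - ω''.1) + (k 1 : ℝ) * (ω'.2 - ω''.2) := by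
    simp only [resLine, kdot, Set.mem_ofPred_eq] at hω'' ⊢
    linarith
  rw [knorm, dist2, ← Real.sqrt_mul (by positivity), hline]
  apply Real.abs_le_sqrt
  nlinarith [sq_nonneg ((k 0 : ℝ) * (ω''.2 - ω'.2) - (k 1 : ℝ) * (ω''.1 - ω'.1)),
    sq_nonneg ((k 2 : ℝ) * (ω''.1 - ω'.1)), sq_nonneg ((k 2 : ℝ) * (ω''.2 - ω'.2))]

theorem lattice_separation_general (k' k'' : Fin 3 → ℤ)
    (hind : LinearIndependent ℝ ![castZ k', castZ k''])
    (ν : ℝ) (ω : Fin 3 → ℝ)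
    (h1 : dot3 ω (castZ k') = 0) (h2 : dot3 ω (castZ k'') = 0)
    (h3 : ν ≤ norm3 ω) :
    (∀ k : Fin 3 → ℤ,
      castZ k ∉ Submodule.span ℝ ({castZ k', castZ k''} : Set (Fin 3 → ℝ)) →
      ν / norm3 (cross3 (castZ k') (castZ k'')) ≤ |dot3 ω (castZ k)|) ∧
    (∀ ω' : ℝ × ℝ, ω = ![ω'.1, ω'.2, (1 : ℝ)] →
      ∀ k : Fin 3 → ℤ, isRes k →
        castZ k ∉ Submodule.span ℝ ({castZ k', castZ k''} : Set (Fin 3 → ℝ)) →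
        ∀ ω'' ∈ resLine k,
          ν / (norm3 (cross3 (castZ k') (castZ k'')) * knorm k) ≤ dist2 ω'' ω') := by
  rw [dot3_eq_dotProduct] at h1 h2
  have hsep : ∀ k : Fin 3 → ℤ, castZ k ∉ Submodule.span ℝ {castZ k', castZ k''} →
      ν / norm3 (cross3 (castZ k') (castZ k'')) ≤ |dot3 ω (castZ k)| := fun k hk ↦ by
    rw [cross3_eq_crossProduct, dot3_eq_dotProduct]
    exact (div_le_div_of_nonneg_right h3 (Real.sqrt_nonneg _)).trans
      (div_norm3_cross_le_abs_dotProduct hind h1 h2 (one_le_abs_castZ_dotProduct_cross hind hk))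
  refine ⟨hsep, fun ω' hω k _ hk ω'' hω'' ↦ ?_⟩
  rw [← div_div]
  refine div_le_of_le_mul₀ (Real.sqrt_nonneg _) (Real.sqrt_nonneg _) ?_
  calc ν / norm3 (cross3 (castZ k') (castZ k'')) ≤ |kdot k ω'| := by
        rw [← dot3_vec3_one_castZ, ← hω]
        exact hsep k hk
    _ ≤ knorm k * dist2 ω'' ω' := abs_kdot_le_knorm_mul_dist2 hω'' ω'
    _ = dist2 ω'' ω' * knorm k := mul_comm _ _

/-- If `ω ∈ ℝ³` is orthogonal to the independent integer vectors `k', k''` and `|ω| ≥ ν`, then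
`|ω·k| ≥ ν/|k'×k''|` for every integer `k` outside the real span of `{k', k''}`; consequently,
for `ω = (ω',1)` every point of the resonance line `Γ_k` is at distance at least
`ν/(|k'×k''| |k|)` from `ω'`. -/
theorem lattice_separation (k' k'' : Fin 3 → ℤ)
    (hind : LinearIndependent ℝ ![castZ k', castZ k''])
    (ν : ℝ) (hν : 0 < ν) (ω : Fin 3 → ℝ)
    (h1 : dot3 ω (castZ k') = 0) (h2 : dot3 ω (castZ k'') = 0)
    (h3 : ν ≤ norm3 ω) :
    (∀ k : Fin 3 → ℤ,
      castZ k ∉ Submodule.span ℝ ({castZ k', castZ k''} : Set (Fin 3 → ℝ)) →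
      ν / norm3 (cross3 (castZ k') (castZ k'')) ≤ |dot3 ω (castZ k)|) ∧
    (∀ ω' : ℝ × ℝ, ω = ![ω'.1, ω'.2, (1 : ℝ)] →
      ∀ k : Fin 3 → ℤ, isRes k →
        castZ k ∉ Submodule.span ℝ ({castZ k', castZ k''} : Set (Fin 3 → ℝ)) →
        ∀ ω'' ∈ resLine k,
          ν / (norm3 (cross3 (castZ k') (castZ k'')) * knorm k) ≤ dist2 ω'' ω') :=
  lattice_separation_general k' k'' hind ν ω h1 h2 h3
end

section
/- Let n ≥ 1, let U ⊂ ℝⁿ be open, let H₀ : U → ℝ be C², and define 𝓗₀ : U×ℝ → ℝ by 𝓗₀(I,E) = exp(H₀(I)+E). Then at every point (I,E) ∈ U×ℝ the determinant of the full Hessian of 𝓗₀ (with respect to the n+1 variables (I,E)) equals 𝓗₀(I,E)^{n+1} · det(∂²H₀(I)). In particular, if the Hessian ∂²H₀(I) is positive definite (or merely invertible) for every I ∈ U, then the Hessian of 𝓗₀ is nondegenerate at every point of U×ℝ. -/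
/-- The Hessian matrix of `f : ℝⁿ → ℝ` at `x`. -/
noncomputable def hessn (n : ℕ) (f : (Fin n → ℝ) → ℝ) (x : Fin n → ℝ) :
    Matrix (Fin n) (Fin n) ℝ :=
  Matrix.of fun i j =>
    fderiv ℝ (fun y => fderiv ℝ f y (Pi.single j 1)) x (Pi.single i 1)

/-- The coordinate directions of `ℝⁿ × ℝ`. -/
noncomputable def dirsP (n : ℕ) : (Fin n ⊕ Fin 1) → (Fin n → ℝ) × ℝ :=
  Sum.elim (fun i => (Pi.single i 1, 0)) (fun _ => (0, 1))

/-- The full `(n+1)×(n+1)` Hessian matrix of `f : ℝⁿ × ℝ → ℝ` at `x` in the variables `(I,E)`. -/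
noncomputable def hessP (n : ℕ) (f : (Fin n → ℝ) × ℝ → ℝ) (x : (Fin n → ℝ) × ℝ) :
    Matrix (Fin n ⊕ Fin 1) (Fin n ⊕ Fin 1) ℝ :=
  Matrix.of fun a b =>
    fderiv ℝ (fun y => fderiv ℝ f y (dirsP n b)) x (dirsP n a)

/-!
Writing `c = exp (H₀ I + E)` and `g = ∇H₀(I)`, the Hessian of `exp (H₀ I + E)` is
`c • [[∂²H₀ + g gᵀ, g], [gᵀ, 1]]`. The Schur complement of the corner `1` is
`∂²H₀ + g gᵀ - g gᵀ = ∂²H₀`, so the determinant is `c ^ (n + 1) * det ∂²H₀`.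
-/

open Filter Topology

theorem Matrix.det_fromBlocks_add_mul_one₂₂ {m n R : Type*}
    [Fintype m] [DecidableEq m] [Fintype n] [DecidableEq n] [CommRing R]
    (A : Matrix m m R) (B : Matrix m n R) (C : Matrix n m R) :
    (Matrix.fromBlocks (A + B * C) B C 1).det = A.det := by
  rw [Matrix.det_fromBlocks_one₂₂, add_sub_cancel_right]

section ExpAdd

open ContinuousLinearMap

variable {F : Type*} [NormedAddCommGroup F] [NormedSpace ℝ F] {H : F → ℝ} {x : F}

theorem hasFDerivAt_exp_add (hH : DifferentiableAt ℝ H x) (t : ℝ) :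
    HasFDerivAt (fun p : F × ℝ => Real.exp (H p.1 + p.2))
      (Real.exp (H x + t) • ((fderiv ℝ H x).comp (fst ℝ F ℝ) + snd ℝ F ℝ)) (x, t) :=
  ((hH.hasFDerivAt.comp (x, t) hasFDerivAt_fst).add hasFDerivAt_snd).exp

theorem fderiv_exp_add_apply (hH : DifferentiableAt ℝ H x) (t : ℝ) (v : F × ℝ) :
    fderiv ℝ (fun p : F × ℝ => Real.exp (H p.1 + p.2)) (x, t) v =
      Real.exp (H x + t) * (fderiv ℝ H x v.1 + v.2) := by
  simp [(hasFDerivAt_exp_add hH t).fderiv, mul_add]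

theorem fderiv_fderiv_exp_add_apply (hH : ContDiffAt ℝ 2 H x) (t : ℝ) (v w : F × ℝ) :
    fderiv ℝ (fun y => fderiv ℝ (fun p : F × ℝ => Real.exp (H p.1 + p.2)) y w) (x, t) v =
      Real.exp (H x + t) * (fderiv ℝ (fun y => fderiv ℝ H y w.1) x v.1 +
        (fderiv ℝ H x w.1 + w.2) * (fderiv ℝ H x v.1 + v.2)) := by
  have hdiff : ∀ᶠ y in 𝓝 (x, t), DifferentiableAt ℝ H y.1 :=
    continuousAt_fst.eventually <|
      (hH.eventually (by simp)).mono fun y hy => hy.differentiableAt two_ne_zero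
  have hfirst : (fun y => fderiv ℝ (fun p : F × ℝ => Real.exp (H p.1 + p.2)) y w)
      =ᶠ[𝓝 (x, t)] fun y => Real.exp (H y.1 + y.2) * (fderiv ℝ H y.1 w.1 + w.2) :=
    hdiff.mono fun y hy => fderiv_exp_add_apply hy y.2 w
  have hsecond : DifferentiableAt ℝ (fun y => fderiv ℝ H y w.1) x :=
    ((hH.fderiv_right le_rfl).differentiableAt one_ne_zero).clm_apply
      (differentiableAt_const _)
  have hlinear : HasFDerivAt (fun y : F × ℝ => fderiv ℝ H y.1 w.1 + w.2)
      ((fderiv ℝ (fun y => fderiv ℝ H y w.1) x).comp (fst ℝ F ℝ)) (x, t) :=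
    (HasFDerivAt.comp (g := fun y => fderiv ℝ H y w.1) (x, t) hsecond.hasFDerivAt
      hasFDerivAt_fst).add_const w.2
  have hprod : HasFDerivAt
      (fun y : F × ℝ => Real.exp (H y.1 + y.2) * (fderiv ℝ H y.1 w.1 + w.2)) _ (x, t) :=
    (hasFDerivAt_exp_add (hH.differentiableAt two_ne_zero) t).mul hlinear
  rw [hfirst.fderiv_eq, hprod.fderiv]
  simp only [smul_add, add_apply, smul_apply, comp_apply, coe_fst', coe_snd', smul_eq_mul]
  ring

end ExpAdd

open Matrix

noncomputable def gradn (n : ℕ) (f : (Fin n → ℝ) → ℝ) (x : Fin n → ℝ) : Fin n → ℝ :=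
  fun i => fderiv ℝ f x (Pi.single i 1)

theorem hessP_exp_add {n : ℕ} {H₀ : (Fin n → ℝ) → ℝ} {I : Fin n → ℝ}
    (hH : ContDiffAt ℝ 2 H₀ I) (E : ℝ) :
    hessP n (fun p => Real.exp (H₀ p.1 + p.2)) (I, E) =
      Real.exp (H₀ I + E) • fromBlocks
        (hessn n H₀ I +
          replicateCol (Fin 1) (gradn n H₀ I) * replicateRow (Fin 1) (gradn n H₀ I))
        (replicateCol (Fin 1) (gradn n H₀ I)) (replicateRow (Fin 1) (gradn n H₀ I)) 1 := by
  ext (i | i) (j | j) <;>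
    simp [hessP, fderiv_fderiv_exp_add_apply hH, dirsP, hessn, gradn, mul_comm,
      Matrix.mul_apply, Matrix.one_apply, eq_iff_true_of_subsingleton]

theorem det_hessP_exp_add {n : ℕ} {H₀ : (Fin n → ℝ) → ℝ} {I : Fin n → ℝ}
    (hH : ContDiffAt ℝ 2 H₀ I) (E : ℝ) :
    (hessP n (fun p => Real.exp (H₀ p.1 + p.2)) (I, E)).det =
      Real.exp (H₀ I + E) ^ (n + 1) * (hessn n H₀ I).det := by
  rw [hessP_exp_add hH, det_smul, det_fromBlocks_add_mul_one₂₂]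
  simp

theorem exp_hessian_det_general (n : ℕ)
    (U : Set (Fin n → ℝ)) (hU : IsOpen U)
    (H₀ : (Fin n → ℝ) → ℝ) (hH : ContDiffOn ℝ 2 H₀ U) :
    (∀ I ∈ U, ∀ E : ℝ,
      (hessP n (fun p => Real.exp (H₀ p.1 + p.2)) (I, E)).det =
        Real.exp (H₀ I + E) ^ (n + 1) * (hessn n H₀ I).det) ∧
    ((∀ I ∈ U, (hessn n H₀ I).det ≠ 0) →
      ∀ I ∈ U, ∀ E : ℝ,
        (hessP n (fun p => Real.exp (H₀ p.1 + p.2)) (I, E)).det ≠ 0) := by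
  have hdet : ∀ I ∈ U, ∀ E : ℝ,
      (hessP n (fun p => Real.exp (H₀ p.1 + p.2)) (I, E)).det =
        Real.exp (H₀ I + E) ^ (n + 1) * (hessn n H₀ I).det :=
    fun I hI E => det_hessP_exp_add (hH.contDiffAt (hU.mem_nhds hI)) E
  refine ⟨hdet, fun hnondeg I hI E => ?_⟩
  rw [hdet I hI E]
  exact mul_ne_zero (pow_ne_zero _ (Real.exp_ne_zero _)) (hnondeg I hI)

/-- For `𝓗₀(I,E) = exp(H₀(I)+E)`, the determinant of the full Hessian of `𝓗₀` equals
`𝓗₀(I,E)^{n+1} · det ∂²H₀(I)` at every point of `U × ℝ`; in particular `𝓗₀` has nondegenerate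
Hessian whenever `∂²H₀` is invertible on `U`. -/
theorem exp_hessian_det (n : ℕ) (hn : 1 ≤ n)
    (U : Set (Fin n → ℝ)) (hU : IsOpen U)
    (H₀ : (Fin n → ℝ) → ℝ) (hH : ContDiffOn ℝ 2 H₀ U) :
    (∀ I ∈ U, ∀ E : ℝ,
      (hessP n (fun p => Real.exp (H₀ p.1 + p.2)) (I, E)).det =
        Real.exp (H₀ I + E) ^ (n + 1) * (hessn n H₀ I).det) ∧
    ((∀ I ∈ U, (hessn n H₀ I).det ≠ 0) →
      ∀ I ∈ U, ∀ E : ℝ,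
        (hessP n (fun p => Real.exp (H₀ p.1 + p.2)) (I, E)).det ≠ 0) :=
  exp_hessian_det_general n U hU H₀ hH
end

section
/- Let K > 0 and let u : ℝⁿ → ℝ be ℤⁿ-periodic and K-semi-concave, i.e. the function x ↦ u(x) − K|x|²/2 is concave on ℝⁿ. Then u is Lipschitz with Lipschitz constant K√n. -/
/-- The integer vector `m ∈ ℤⁿ` viewed as a point of Euclidean space. -/
noncomputable def intVec (n : ℕ) (m : Fin n → ℤ) : EuclideanSpace ℝ (Fin n) :=
  WithLp.toLp 2 (fun i => (m i : ℝ))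

/-!
On every coordinate line `u` is `1`-periodic and `K`-semi-concave in one variable. Comparing,
by concavity, the point `s + δ` with `s` and `s + 1`, and `s` with `s + δ - 1` and `s + δ`,
bounds the increment over `δ ∈ [0, 1]` by `K δ (1 - δ) / 2`; by periodicity the restriction is
then `K / 2`-Lipschitz. Walking from `y` to `x` one coordinate at a time gives
`|u x - u y| ≤ K / 2 ‖x - y‖₁ ≤ K / 2 √n ‖x - y‖`.
-/

open Set Function

lemma Int.fract_mul_one_sub_fract_le_abs (x : ℝ) : fract x * (1 - fract x) ≤ |x| := by
  have h0 := Int.fract_nonneg x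
  have h1 := Int.fract_lt_one x
  calc fract x * (1 - fract x) ≤ min (fract x) (1 - fract x) := by
        apply le_min <;> nlinarith
    _ = |x - round x| := (abs_sub_round_eq_min x).symm
    _ ≤ |x| := by simpa using round_le x 0

namespace Function.Periodic

variable {f : ℝ → ℝ} {K : ℝ}

lemma abs_add_sub_le_of_concaveOn (hper : Periodic f 1)
    (hsc : ConcaveOn ℝ univ fun t => f t - K * t ^ 2 / 2) (s : ℝ) {δ : ℝ}
    (h0 : 0 ≤ δ) (h1 : δ ≤ 1) : |f (s + δ) - f s| ≤ K * (δ * (1 - δ)) / 2 := by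
  have hfwd := hsc.2 (mem_univ s) (mem_univ (s + 1)) (sub_nonneg.2 h1) h0 (by ring)
  have hbwd := hsc.2 (mem_univ (s + δ - 1)) (mem_univ (s + δ)) h0 (sub_nonneg.2 h1) (by ring)
  simp only [smul_eq_mul, hper s] at hfwd hbwd
  rw [show (1 - δ) * s + δ * (s + 1) = s + δ by ring] at hfwd
  rw [show δ * (s + δ - 1) + (1 - δ) * (s + δ) = s by ring, hper.sub_eq] at hbwd
  rw [abs_le]
  constructor <;> nlinarith

lemma abs_sub_le_of_concaveOn (hper : Periodic f 1)
    (hsc : ConcaveOn ℝ univ fun t => f t - K * t ^ 2 / 2) (hK : 0 ≤ K) (t s : ℝ) :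
    |f t - f s| ≤ K / 2 * |t - s| := by
  have ht : f t = f (s + Int.fract (t - s)) := by
    rw [← (hper.int_mul ⌊t - s⌋) (s + Int.fract (t - s)), mul_one, add_assoc,
      Int.fract_add_floor]
    ring_nf
  rw [ht]
  calc |f (s + Int.fract (t - s)) - f s|
        ≤ K * (Int.fract (t - s) * (1 - Int.fract (t - s))) / 2 :=
        hper.abs_add_sub_le_of_concaveOn hsc s (Int.fract_nonneg _) (Int.fract_lt_one _).le
    _ ≤ K / 2 * |t - s| := by
        have := Int.fract_mul_one_sub_fract_le_abs (t - s)
        rw [mul_div_right_comm]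
        gcongr

end Function.Periodic

lemma ConcaveOn.comp_add_smul_sub_sq {E : Type*} [NormedAddCommGroup E] [InnerProductSpace ℝ E]
    {u : E → ℝ} {K : ℝ} (hsc : ConcaveOn ℝ univ fun x => u x - K * ‖x‖ ^ 2 / 2) (a e : E) :
    ConcaveOn ℝ univ fun t : ℝ => u (a + t • e) - K * ‖e‖ ^ 2 * t ^ 2 / 2 := by
  have hline : ConcaveOn ℝ univ fun t : ℝ => u (a + t • e) - K * ‖a + t • e‖ ^ 2 / 2 :=
    (hsc.translate_right a).comp_linearMap (LinearMap.toSpanSingleton ℝ E e)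
  have haff : ConcaveOn ℝ univ fun t : ℝ => t * (K * inner ℝ a e) + K * ‖a‖ ^ 2 / 2 :=
    (((LinearMap.mul ℝ ℝ).flip (K * inner ℝ a e)).concaveOn convex_univ).add_const _
  refine (hline.add haff).congr fun t _ => ?_
  simp only [Pi.add_apply]
  rw [norm_add_sq_real, real_inner_smul_right, norm_smul, Real.norm_eq_abs, mul_pow, sq_abs]
  ring

lemma abs_add_sum_sub_le {E ι : Type*} [AddCommGroup E] {u : E → ℝ} {v : ι → E} {c : ι → ℝ}
    (h : ∀ a i, |u (a + v i) - u a| ≤ c i) (a : E) (s : Finset ι) :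
    |u (a + ∑ i ∈ s, v i) - u a| ≤ ∑ i ∈ s, c i := by
  classical
  induction s using Finset.induction_on generalizing a with
  | empty => simp
  | insert i s his ih =>
    rw [Finset.sum_insert his, Finset.sum_insert his, ← add_assoc]
    calc |u (a + v i + ∑ j ∈ s, v j) - u a|
        ≤ |u (a + v i + ∑ j ∈ s, v j) - u (a + v i)| + |u (a + v i) - u a| := abs_sub_le _ _ _
      _ ≤ (∑ j ∈ s, c j) + c i := add_le_add (ih _) (h a i)
      _ = c i + ∑ j ∈ s, c j := add_comm _ _

lemma EuclideanSpace.sum_abs_le_sqrt_card_mul_norm {ι : Type*} [Fintype ι]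
    (x : EuclideanSpace ℝ ι) :
    ∑ i, |x i| ≤ √(Fintype.card ι) * ‖x‖ := by
  simpa [EuclideanSpace.norm_eq] using Real.sum_mul_le_sqrt_mul_sqrt Finset.univ 1 fun i => |x i|

lemma EuclideanSpace.abs_sub_le_mul_sum_abs {ι : Type*} [Fintype ι] [DecidableEq ι]
    {u : EuclideanSpace ℝ ι → ℝ} {L : ℝ}
    (h : ∀ a i t, |u (a + t • EuclideanSpace.single i 1) - u a| ≤ L * |t|)
    (x y : EuclideanSpace ℝ ι) :
    |u x - u y| ≤ L * ∑ i, |x i - y i| := by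
  have hxy : x = y + ∑ i, (x - y) i • EuclideanSpace.single i 1 := by
    rw [← sub_eq_iff_eq_add']
    simpa using ((EuclideanSpace.basisFun ι ℝ).sum_repr (x - y)).symm
  rw [Finset.mul_sum]
  conv_lhs => rw [hxy]
  simpa using abs_add_sum_sub_le (fun a i => h a i ((x - y) i)) y Finset.univ

lemma intVec_single_one (n : ℕ) (i : Fin n) :
    intVec n (Pi.single i 1) = EuclideanSpace.single i 1 := by
  ext j
  simp [intVec, Pi.single_apply]

lemma periodic_comp_add_smul_single {n : ℕ} {u : EuclideanSpace ℝ (Fin n) → ℝ}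
    (hper : ∀ (x : EuclideanSpace ℝ (Fin n)) (m : Fin n → ℤ), u (x + intVec n m) = u x)
    (a : EuclideanSpace ℝ (Fin n)) (i : Fin n) :
    Periodic (fun t : ℝ => u (a + t • EuclideanSpace.single i 1)) 1 := fun t => by
  dsimp only
  rw [add_smul, one_smul, ← add_assoc, ← intVec_single_one]
  exact hper _ _

/-- A `ℤⁿ`-periodic `K`-semi-concave function on `ℝⁿ` is Lipschitz with constant `K√n`. -/
theorem semiconcave_periodic_lipschitz (n : ℕ) (K : ℝ) (hK : 0 < K)
    (u : EuclideanSpace ℝ (Fin n) → ℝ)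
    (hper : ∀ (x : EuclideanSpace ℝ (Fin n)) (m : Fin n → ℤ), u (x + intVec n m) = u x)
    (hsc : ConcaveOn ℝ Set.univ
      (fun x : EuclideanSpace ℝ (Fin n) => u x - K * ‖x‖ ^ 2 / 2)) :
    ∀ x y : EuclideanSpace ℝ (Fin n), |u x - u y| ≤ K * Real.sqrt n * ‖x - y‖ := by
  intro x y
  have hline : ∀ a i t, |u (a + t • EuclideanSpace.single i 1) - u a| ≤ K / 2 * |t| := by
    intro a i t
    simpa using (periodic_comp_add_smul_single hper a i).abs_sub_le_of_concaveOn
      (by simpa using hsc.comp_add_smul_sub_sq a (EuclideanSpace.single i 1)) hK.le t 0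
  calc |u x - u y| ≤ K / 2 * ∑ i, |(x - y) i| :=
        EuclideanSpace.abs_sub_le_mul_sum_abs hline x y
    _ ≤ K / 2 * (√n * ‖x - y‖) := by
        gcongr
        simpa using EuclideanSpace.sum_abs_le_sqrt_card_mul_norm (x - y)
    _ ≤ K * √n * ‖x - y‖ := by
        have : 0 ≤ K * √n * ‖x - y‖ := by positivity
        linarith
end

section
/- Let K > 0 and let u, v : ℝⁿ → ℝ be ℤⁿ-periodic K-semi-concave functions, and let I ⊂ ℝⁿ be the set of points where the sum u+v attains its minimum. Then u and v are differentiable at every point of I, and the gradient map x ↦ du(x) is 6K-Lipschitz on I. -/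
open Set Asymptotics Topology

section QuadraticApprox

variable {E : Type*} [NormedAddCommGroup E] [NormedSpace ℝ E]

def HasQuadraticApproxAt (f : E → ℝ) (ℓ : E →L[ℝ] ℝ) (C : ℝ) (x : E) : Prop :=
  ∀ y, |f y - f x - ℓ (y - x)| ≤ C * ‖y - x‖ ^ 2

variable {f : E → ℝ} {ℓ ℓ' : E →L[ℝ] ℝ} {C : ℝ} {x x' : E}

theorem HasQuadraticApproxAt.hasFDerivAt (h : HasQuadraticApproxAt f ℓ C x) :
    HasFDerivAt f ℓ x := by
  rw [hasFDerivAt_iff_isLittleO_nhds_zero]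
  refine IsBigO.trans_isLittleO (g := fun z : E => ‖z‖ ^ 2) ?_ (isLittleO_norm_pow_id one_lt_two)
  refine IsBigO.of_bound C (Filter.Eventually.of_forall fun z => ?_)
  simpa [Real.norm_eq_abs] using h (x + z)

theorem HasQuadraticApproxAt.apply_le (h : HasQuadraticApproxAt f ℓ C x)
    (h' : HasQuadraticApproxAt f ℓ' C x') (z : E) :
    (ℓ - ℓ') z ≤ C * (‖x' - x‖ ^ 2 + ‖x' - x + z‖ ^ 2 + ‖z‖ ^ 2) := by
  have h₁ := abs_le.mp (h (x' + z))
  have h₂ := abs_le.mp (h' (x' + z))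
  have h₃ := abs_le.mp (h x')
  rw [show x' + z - x = x' - x + z by abel, map_add] at h₁
  rw [add_sub_cancel_left] at h₂
  rw [sub_apply]
  linarith [h₁.1, h₂.2, h₃.2]

/-- On vectors of length `r = ‖x - x'‖`, `apply_le` bounds `ℓ - ℓ'` by
`C (r² + (2r)² + r²) = 6 C r²`. -/
theorem HasQuadraticApproxAt.norm_sub_le (hC : 0 ≤ C) (h : HasQuadraticApproxAt f ℓ C x)
    (h' : HasQuadraticApproxAt f ℓ' C x') : ‖ℓ - ℓ'‖ ≤ 6 * C * ‖x - x'‖ := by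
  rcases eq_or_ne x x' with rfl | hne
  · rw [h.hasFDerivAt.unique h'.hasFDerivAt, sub_self, norm_zero]
    positivity
  set r := ‖x - x'‖
  have hr : 0 < r := norm_pos_iff.mpr (sub_ne_zero.mpr hne)
  have hunit : ∀ w : E, ‖w‖ = 1 → (ℓ - ℓ') w ≤ 6 * C * r := by
    intro w hw
    have hrw : ‖r • w‖ = r := by rw [norm_smul, hw, Real.norm_of_nonneg hr.le, mul_one]
    have hmid : ‖x' - x + r • w‖ ≤ 2 * r := by
      calc ‖x' - x + r • w‖ ≤ ‖x' - x‖ + ‖r • w‖ := norm_add_le _ _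
        _ = 2 * r := by rw [norm_sub_rev, hrw]; ring
    have := h.apply_le h' (r • w)
    rw [map_smul, smul_eq_mul, hrw, norm_sub_rev] at this
    have hmid2 : ‖x' - x + r • w‖ ^ 2 ≤ 4 * r ^ 2 := by nlinarith [norm_nonneg (x' - x + r • w)]
    nlinarith
  refine ContinuousLinearMap.opNorm_le_of_unit_norm (by positivity) fun w hw => ?_
  rw [Real.norm_eq_abs, abs_le]
  refine ⟨?_, hunit w hw⟩
  have := hunit (-w) (by rw [norm_neg, hw])
  rw [map_neg] at this
  linarith

end QuadraticApprox

section Supergradient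

variable {E : Type*} [NormedAddCommGroup E] [NormedSpace ℝ E] [FiniteDimensional ℝ E]

/-- The point `(x, f x)` lies outside the open convex strict hypograph of `f`; a functional
separating them, normalised by its (positive) value on the vertical direction, gives `ℓ`. -/
theorem ConcaveOn.exists_le_add_apply_sub {f : E → ℝ} (hf : ConcaveOn ℝ univ f) (x : E) :
    ∃ ℓ : E →L[ℝ] ℝ, ∀ y, f y ≤ f x + ℓ (y - x) := by
  have hcont : Continuous f := continuousOn_univ.mp (hf.continuousOn isOpen_univ)
  have hopen : IsOpen {p : E × ℝ | p.1 ∈ univ ∧ p.2 < f p.1} := by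
    simpa using isOpen_lt continuous_snd (hcont.comp continuous_fst)
  obtain ⟨φ, hφ⟩ := geometric_hahn_banach_open_point hf.convex_strict_hypograph hopen
    (x := (x, f x)) (by simp)
  have hsplit : ∀ y t, φ (y, t) = φ (y, 0) + t * φ (0, 1) := fun y t => by
    rw [← smul_eq_mul, ← map_smul, ← map_add, Prod.smul_mk, Prod.mk_add_mk]; simp
  have hc : 0 < φ (0, 1) := by
    have := hφ (x, f x - 1) (by simp)
    rw [hsplit x (f x - 1), hsplit x (f x)] at this
    linarith
  refine ⟨-(φ (0, 1))⁻¹ • φ.comp (ContinuousLinearMap.inl ℝ E ℝ), fun y => ?_⟩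
  refine le_of_forall_lt fun t ht => ?_
  have hlt := hφ (y, t) ⟨mem_univ y, ht⟩
  rw [hsplit y t, hsplit x (f x)] at hlt
  have key : t - f x < (φ (0, 1))⁻¹ * (φ (x, 0) - φ (y, 0)) := by
    rw [lt_inv_mul_iff₀ hc]; linarith
  simp only [FunLike.coe_smul, ContinuousLinearMap.coe_comp, Pi.smul_apply,
    Function.comp_apply, ContinuousLinearMap.inl_apply, map_sub, smul_eq_mul]
  linarith

end Supergradient

section SemiConcave

variable {E : Type*} [NormedAddCommGroup E] [InnerProductSpace ℝ E] [FiniteDimensional ℝ E]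

theorem exists_le_add_apply_sub_add_sq_of_concaveOn {K : ℝ} {u : E → ℝ}
    (hu : ConcaveOn ℝ univ fun x => u x - K * ‖x‖ ^ 2 / 2) (x : E) :
    ∃ ℓ : E →L[ℝ] ℝ, ∀ y, u y ≤ u x + ℓ (y - x) + K / 2 * ‖y - x‖ ^ 2 := by
  obtain ⟨ℓ, hℓ⟩ := hu.exists_le_add_apply_sub x
  refine ⟨ℓ + K • innerSL ℝ x, fun y => ?_⟩
  have hexpand : ‖y‖ ^ 2 = ‖x‖ ^ 2 + 2 * inner ℝ x (y - x) + ‖y - x‖ ^ 2 := by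
    simpa using norm_add_sq_real x (y - x)
  simp only [add_apply, FunLike.coe_smul, Pi.smul_apply, innerSL_apply_apply, smul_eq_mul]
  linear_combination hℓ y + K / 2 * hexpand

/-- For the supports `ℓ, m` of `u, v` at `x`, `h = 0` minimises `(ℓ + m) h + K ‖h‖²`,
so Fermat's rule forces `m = -ℓ`. -/
theorem exists_hasQuadraticApproxAt_of_forall_add_le {K : ℝ} {u v : E → ℝ}
    (hu : ConcaveOn ℝ univ fun x => u x - K * ‖x‖ ^ 2 / 2)
    (hv : ConcaveOn ℝ univ fun x => v x - K * ‖x‖ ^ 2 / 2) {x : E}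
    (hx : ∀ y, u x + v x ≤ u y + v y) : ∃ ℓ : E →L[ℝ] ℝ, HasQuadraticApproxAt u ℓ (K / 2) x := by
  obtain ⟨ℓ, hℓ⟩ := exists_le_add_apply_sub_add_sq_of_concaveOn hu x
  obtain ⟨m, hm⟩ := exists_le_add_apply_sub_add_sq_of_concaveOn hv x
  set ψ : E → ℝ := fun h => (ℓ + m) h + K * ‖h‖ ^ 2
  have hψ : HasQuadraticApproxAt ψ (ℓ + m) |K| 0 := fun h => by simp [ψ, abs_mul]
  have hmin : IsLocalMin ψ 0 := Filter.Eventually.of_forall fun h => by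
    have hsum := hx (x + h)
    have hu' := hℓ (x + h)
    have hv' := hm (x + h)
    rw [add_sub_cancel_left] at hu' hv'
    simp only [ψ, add_apply, map_zero, norm_zero, add_zero]
    linarith
  have hm_eq : m = -ℓ := eq_neg_of_add_eq_zero_right (hmin.hasFDerivAt_eq_zero hψ.hasFDerivAt)
  refine ⟨ℓ, fun y => abs_le.mpr ⟨?_, ?_⟩⟩
  · have hv' := hm y
    rw [hm_eq, neg_apply] at hv'
    linarith [hx y]
  · linarith [hℓ y]

end SemiConcave

theorem semiconcave_pair_gradient_lipschitz_general (n : ℕ) (K : ℝ) (hK : 0 < K)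
    (u v : EuclideanSpace ℝ (Fin n) → ℝ)
    (husc : ConcaveOn ℝ Set.univ
      (fun x : EuclideanSpace ℝ (Fin n) => u x - K * ‖x‖ ^ 2 / 2))
    (hvsc : ConcaveOn ℝ Set.univ
      (fun x : EuclideanSpace ℝ (Fin n) => v x - K * ‖x‖ ^ 2 / 2)) :
    (∀ x ∈ {z : EuclideanSpace ℝ (Fin n) | ∀ y, u z + v z ≤ u y + v y},
      DifferentiableAt ℝ u x ∧ DifferentiableAt ℝ v x) ∧
    (∀ x ∈ {z : EuclideanSpace ℝ (Fin n) | ∀ y, u z + v z ≤ u y + v y},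
      ∀ x' ∈ {z : EuclideanSpace ℝ (Fin n) | ∀ y, u z + v z ≤ u y + v y},
        ‖fderiv ℝ u x - fderiv ℝ u x'‖ ≤ 6 * K * ‖x - x'‖) := by
  have approx_u : ∀ x, (∀ y, u x + v x ≤ u y + v y) → ∃ ℓ, HasQuadraticApproxAt u ℓ (K / 2) x :=
    fun x hx => exists_hasQuadraticApproxAt_of_forall_add_le husc hvsc hx
  have approx_v : ∀ x, (∀ y, u x + v x ≤ u y + v y) → ∃ ℓ, HasQuadraticApproxAt v ℓ (K / 2) x :=
    fun x hx => exists_hasQuadraticApproxAt_of_forall_add_le hvsc husc fun y => by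
      linarith [hx y]
  refine ⟨fun x hx => ⟨?_, ?_⟩, fun x hx x' hx' => ?_⟩
  · obtain ⟨ℓ, hℓ⟩ := approx_u x hx
    exact hℓ.hasFDerivAt.differentiableAt
  · obtain ⟨ℓ, hℓ⟩ := approx_v x hx
    exact hℓ.hasFDerivAt.differentiableAt
  obtain ⟨ℓ, hℓ⟩ := approx_u x hx
  obtain ⟨ℓ', hℓ'⟩ := approx_u x' hx'
  rw [hℓ.hasFDerivAt.fderiv, hℓ'.hasFDerivAt.fderiv]
  calc ‖ℓ - ℓ'‖ ≤ 6 * (K / 2) * ‖x - x'‖ := hℓ.norm_sub_le (by positivity) hℓ'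
    _ ≤ 6 * K * ‖x - x'‖ := by gcongr; linarith

/-- If `u, v` are `ℤⁿ`-periodic `K`-semi-concave functions and `I` is the set of minima of
`u + v`, then `u` and `v` are differentiable at every point of `I` and `x ↦ du(x)` is
`6K`-Lipschitz on `I`. -/
theorem semiconcave_pair_gradient_lipschitz (n : ℕ) (K : ℝ) (hK : 0 < K)
    (u v : EuclideanSpace ℝ (Fin n) → ℝ)
    (huper : ∀ (x : EuclideanSpace ℝ (Fin n)) (m : Fin n → ℤ), u (x + intVec n m) = u x)
    (hvper : ∀ (x : EuclideanSpace ℝ (Fin n)) (m : Fin n → ℤ), v (x + intVec n m) = v x)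
    (husc : ConcaveOn ℝ Set.univ
      (fun x : EuclideanSpace ℝ (Fin n) => u x - K * ‖x‖ ^ 2 / 2))
    (hvsc : ConcaveOn ℝ Set.univ
      (fun x : EuclideanSpace ℝ (Fin n) => v x - K * ‖x‖ ^ 2 / 2)) :
    (∀ x ∈ {z : EuclideanSpace ℝ (Fin n) | ∀ y, u z + v z ≤ u y + v y},
      DifferentiableAt ℝ u x ∧ DifferentiableAt ℝ v x) ∧
    (∀ x ∈ {z : EuclideanSpace ℝ (Fin n) | ∀ y, u z + v z ≤ u y + v y},
      ∀ x' ∈ {z : EuclideanSpace ℝ (Fin n) | ∀ y, u z + v z ≤ u y + v y},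
        ‖fderiv ℝ u x - fderiv ℝ u x'‖ ≤ 6 * K * ‖x - x'‖) :=
  semiconcave_pair_gradient_lipschitz_general n K hK u v husc hvsc
end
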